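/- Let (G,σ) be a binary-explainable BMG with binary-refinable tree (T,σ). A binary tree (T',σ) on the vertex set of G explains (G,σ) if and only if (T',σ) is a refinement of (T,σ). -/

import Mathlib

/-- A rooted phylogenetic tree with leaf set `V`, encoded by its hierarchy of clusters
(the cluster of a vertex is the set of leaves below it; inner vertices of a phylogenetic
tree have at least two children, so vertices correspond bijectively to clusters). -/
structure PhyloTree (V : Type*) where
  clusters : Set (Set V)
  nonempty_of_mem : ∀ A ∈ clusters, A.Nonempty
  univ_mem : Set.univ ∈ clusters
  singleton_mem : ∀ v : V, {v} ∈ clusters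
  nested : ∀ A ∈ clusters, ∀ B ∈ clusters, A ⊆ B ∨ B ⊆ A ∨ Disjoint A B

namespace PhyloTree

variable {V : Type*}

/-- The cluster of the last common ancestor of `x` and `y`: the smallest cluster
containing both (the clusters containing `x` and `y` form a chain, so their
intersection is the smallest one). -/
def lca (T : PhyloTree V) (x y : V) : Set V :=
  ⋂₀ {A | A ∈ T.clusters ∧ x ∈ A ∧ y ∈ A}

/-- The rooted triple `xy|z` (on three pairwise distinct leaves) is displayed by `T`:
`lca(x,y) ≺ lca(x,z) = lca(y,z)`. -/
def Displays (T : PhyloTree V) (x y z : V) : Prop :=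
  x ≠ y ∧ x ≠ z ∧ y ≠ z ∧ T.lca x y ⊂ T.lca x z ∧ T.lca x z = T.lca y z

/-- `T` displays every triple of `R`; a triple `(x, y, z)` encodes `xy|z`. -/
def DisplaysSet (T : PhyloTree V) (R : Set (V × V × V)) : Prop :=
  ∀ t ∈ R, T.Displays t.1 t.2.1 t.2.2

/-- `r(T)`, the set of triples displayed by `T`. -/
def triples (T : PhyloTree V) : Set (V × V × V) :=
  {t | T.Displays t.1 t.2.1 t.2.2}

/-- `T` is binary: every inner vertex (cluster with at least two leaves) has exactly
two children, i.e. splits into two disjoint proper subclusters. -/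
def IsBinary (T : PhyloTree V) : Prop :=
  ∀ A ∈ T.clusters, 1 < A.ncard →
    ∃ B ∈ T.clusters, ∃ D ∈ T.clusters,
      Disjoint B D ∧ B ∪ D = A ∧ B ⊂ A ∧ D ⊂ A

/-- `T'` is a refinement of `T`: they have the same leaf set and `T` is obtained from
`T'` by contracting inner edges, i.e. every cluster of `T` is a cluster of `T'`. -/
def Refines (T' T : PhyloTree V) : Prop :=
  T.clusters ⊆ T'.clusters

end PhyloTree

section BMG

variable {V C : Type*}

/-- `y` is a best match of `x` in the leaf-colored tree `(T,σ)`. -/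
def bestMatch (T : PhyloTree V) (σ : V → C) (x y : V) : Prop :=
  σ x ≠ σ y ∧ ∀ y' : V, σ y' = σ y → T.lca x y ⊆ T.lca x y'

/-- The leaf-colored tree `(T,σ)` explains the vertex-colored digraph `(E,σ)`,
i.e. `(E,σ)` is the best match graph of `(T,σ)`. -/
def Explains (T : PhyloTree V) (σ : V → C) (E : V → V → Prop) : Prop :=
  ∀ x y, E x y ↔ bestMatch T σ x y

/-- `(E,σ)` is a best match graph. -/
def IsBMG (E : V → V → Prop) (σ : V → C) : Prop :=
  ∃ T : PhyloTree V, Explains T σ E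

/-- `(E,σ)` is binary-explainable. -/
def BinaryExplainable (E : V → V → Prop) (σ : V → C) : Prop :=
  ∃ T : PhyloTree V, T.IsBinary ∧ Explains T σ E

/-- The informative triples `R(G,σ)`: `(a,b,b')` encodes `ab|b'`. -/
def informativeTriples (E : V → V → Prop) (σ : V → C) : Set (V × V × V) :=
  {t | σ t.1 ≠ σ t.2.1 ∧ σ t.2.1 = σ t.2.2 ∧ E t.1 t.2.1 ∧ ¬ E t.1 t.2.2}

/-- The forbidden triples `F(G,σ)`: `(a,b,b')` encodes `ab|b'`. -/
def forbiddenTriples (E : V → V → Prop) (σ : V → C) : Set (V × V × V) :=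
  {t | σ t.1 ≠ σ t.2.1 ∧ σ t.2.1 = σ t.2.2 ∧ t.2.1 ≠ t.2.2 ∧ E t.1 t.2.1 ∧ E t.1 t.2.2}

/-- The extended triple set `R^bin(G,σ) = R(G,σ) ∪ {bb'|a : ab|b' ∈ F(G,σ)}`. -/
def Rbin (E : V → V → Prop) (σ : V → C) : Set (V × V × V) :=
  informativeTriples E σ ∪ {t | (t.2.2, t.1, t.2.1) ∈ forbiddenTriples E σ}

/-- Properly colored: arcs only between vertices of distinct colors. -/
def ProperlyColored (E : V → V → Prop) (σ : V → C) : Prop :=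
  ∀ x y, E x y → σ x ≠ σ y

/-- sf-colored: properly colored and every vertex has, for each color (of the graph)
different from its own, at least one out-neighbor of that color. -/
def SfColored (E : V → V → Prop) (σ : V → C) : Prop :=
  ProperlyColored E σ ∧ ∀ x y : V, σ y ≠ σ x → ∃ z, E x z ∧ σ z = σ y

/-- A triple set is consistent if some tree displays all of its triples. -/
def Consistent (R : Set (V × V × V)) : Prop :=
  ∃ T : PhyloTree V, T.DisplaysSet R

/-- The closure `cl(R)`: all triples displayed by every tree displaying `R`. -/
def tripleClosure (R : Set (V × V × V)) : Set (V × V × V) :=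
  {t | ∀ T : PhyloTree V, T.DisplaysSet R → T.Displays t.1 t.2.1 t.2.2}

/-- `(T,σ)` is a least resolved tree for `(E,σ)`: it explains `(E,σ)` and no tree
obtained from it by contracting an edge (i.e. by removing a non-root inner cluster)
explains `(E,σ)`. -/
def IsLRT (T : PhyloTree V) (σ : V → C) (E : V → V → Prop) : Prop :=
  Explains T σ E ∧
    ∀ A ∈ T.clusters, A ≠ Set.univ → 1 < A.ncard →
      ∀ T' : PhyloTree V, T'.clusters = T.clusters \ {A} → ¬ Explains T' σ E

end BMG

section Aho

variable {V : Type*}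

/-- Adjacency in the Aho graph `[R,L]`: `x` and `y` are joined whenever `xy|z ∈ R`
for some `z ∈ L` (only triples with all leaves in `L` are taken into account). -/
def ahoAdj (R : Set (V × V × V)) (L : Set V) (x y : V) : Prop :=
  x ∈ L ∧ y ∈ L ∧ ∃ z ∈ L, (x, y, z) ∈ R ∨ (y, x, z) ∈ R

/-- The vertex set of the connected component of `x` in the Aho graph `[R,L]`. -/
def ahoComponent (R : Set (V × V × V)) (L : Set V) (x : V) : Set V :=
  {y | Relation.ReflTransGen (ahoAdj R L) x y}

/-- The clusters of the Aho tree `Aho(R, V)`: the full leaf set, and recursively the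
connected components of the Aho graphs. -/
inductive IsAhoCluster (R : Set (V × V × V)) : Set V → Prop
  | univ : IsAhoCluster R Set.univ
  | component {L : Set V} {x : V} :
      IsAhoCluster R L → x ∈ L → IsAhoCluster R (ahoComponent R L x)

/-- `T` is the Aho tree (`BUILD` tree) of the triple set `R` on the full leaf set. -/
def IsAhoTree (R : Set (V × V × V)) (T : PhyloTree V) : Prop :=
  T.clusters = {A | IsAhoCluster R A}

/-- The union of the leaf sets of the triples in `R`. -/
def tripleLeaves (R : Set (V × V × V)) : Set V :=
  {v | ∃ t ∈ R, v = t.1 ∨ v = t.2.1 ∨ v = t.2.2}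

end Aho

/-!
A tree refining the binary-refinable tree `T = Aho(R^bin)` displays every triple `xy|z` of
`R^bin`: in an Aho tree, `z` lies outside `lca(x, y)`, because otherwise `x` and `y` would be
joined in the Aho graph of that cluster and its components could not split it. For an
sf-colored graph, displaying `R^bin` already pins down all best matches.

Conversely, let `T'` be binary and explain `(G,σ)`, and descend the Aho recursion. If a cluster
`L` of `T` is a cluster of `T'` but a component `C` of the Aho graph on `L` is not, let `M` be
the smallest cluster of `T'` containing `C`, with children `M₁` and `M₂`. Some Aho edge `pq`
of `C` runs from `M₁` to `M₂`, and there is a leaf `z ∈ M \ C`. Best matches in `T'` must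
respect the split `M₁ | M₂`, while best matches in `T` are read off the Aho components; chasing
the best matches of `z` and of the third leaf of the triple behind `pq` through both trees
gives a contradiction.
-/

open Relation

theorem Relation.ReflTransGen.exists_rel_mem_not_mem {α : Type*} {r : α → α → Prop}
    {S : Set α} {a b : α} (h : ReflTransGen r a b) (ha : a ∈ S) (hb : b ∉ S) :
    ∃ c d, ReflTransGen r a c ∧ c ∈ S ∧ r c d ∧ d ∉ S := by
  induction h with
  | refl => exact absurd ha hb
  | @tail c d hac hcd ih =>
    by_cases hc : c ∈ S
    · exact ⟨c, d, hac, hc, hcd, hb⟩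
    · exact ih hc

namespace PhyloTree

variable {V : Type*} (T : PhyloTree V) {A B P : Set V} {x y z : V}

theorem subset_or_subset_of_mem (hA : A ∈ T.clusters) (hB : B ∈ T.clusters) (hxA : x ∈ A)
    (hxB : x ∈ B) : A ⊆ B ∨ B ⊆ A :=
  (T.nested A hA B hB).imp_right fun h => h.resolve_right
    fun hd => Set.disjoint_left.1 hd hxA hxB

theorem lca_subset (hA : A ∈ T.clusters) (hx : x ∈ A) (hy : y ∈ A) : T.lca x y ⊆ A :=
  Set.sInter_subset_of_mem ⟨hA, hx, hy⟩

theorem mem_lca_left : x ∈ T.lca x y :=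
  Set.mem_sInter.2 fun _ hA => hA.2.1

theorem mem_lca_right : y ∈ T.lca x y :=
  Set.mem_sInter.2 fun _ hA => hA.2.2

theorem lca_comm (x y : V) : T.lca x y = T.lca y x := by
  simp only [lca, and_comm (a := x ∈ _)]

variable [Finite V]

theorem exists_least_cluster (𝒞 : Set (Set V)) (h𝒞 : 𝒞 ⊆ T.clusters) (hx : ∀ A ∈ 𝒞, x ∈ A)
    (hne : 𝒞.Nonempty) : ∃ B ∈ 𝒞, ∀ A ∈ 𝒞, B ⊆ A := by
  obtain ⟨B, hB, hmin⟩ := (Set.toFinite 𝒞).exists_minimalFor id 𝒞 hne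
  refine ⟨B, hB, fun A hA => ?_⟩
  rcases T.subset_or_subset_of_mem (h𝒞 hB) (h𝒞 hA) (hx B hB) (hx A hA) with h | h
  · exact h
  · exact hmin hA h

theorem lca_mem (x y : V) : T.lca x y ∈ T.clusters := by
  obtain ⟨B, hB, hmin⟩ := T.exists_least_cluster {A | A ∈ T.clusters ∧ x ∈ A ∧ y ∈ A}
    (fun _ hA => hA.1) (fun _ hA => hA.2.1) ⟨Set.univ, T.univ_mem, trivial, trivial⟩
  have hlca : T.lca x y = B := (Set.sInter_subset_of_mem hB).antisymm (Set.subset_sInter hmin)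
  exact hlca ▸ hB.1

theorem subset_lca_of_not_mem (hP : P ∈ T.clusters) (hx : x ∈ P) (hz : z ∉ P) :
    P ⊆ T.lca x z :=
  (T.subset_or_subset_of_mem (T.lca_mem x z) hP T.mem_lca_left hx).resolve_left
    fun h => hz (h T.mem_lca_right)

theorem displays_of_mem_of_not_mem (hxy : x ≠ y) (hP : P ∈ T.clusters) (hx : x ∈ P)
    (hy : y ∈ P) (hz : z ∉ P) : T.Displays x y z := by
  have hPx := T.subset_lca_of_not_mem hP hx hz
  have hPy := T.subset_lca_of_not_mem hP hy hz
  refine ⟨hxy, fun h => hz (h ▸ hx), fun h => hz (h ▸ hy), ?_, ?_⟩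
  · exact ((T.lca_subset hP hx hy).trans hPx).ssubset_of_not_subset
      fun h => hz (T.lca_subset hP hx hy (h T.mem_lca_right))
  · exact (T.lca_subset (T.lca_mem y z) (hPy hx) T.mem_lca_right).antisymm
      (T.lca_subset (T.lca_mem x z) (hPx hy) T.mem_lca_right)

end PhyloTree

namespace PhyloTree

variable {V : Type*} {T : PhyloTree V}

structure Splits (T : PhyloTree V) (M M₁ M₂ : Set V) : Prop where
  mem : M ∈ T.clusters
  left_mem : M₁ ∈ T.clusters
  right_mem : M₂ ∈ T.clusters
  disjoint : Disjoint M₁ M₂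
  union_eq : M₁ ∪ M₂ = M

namespace Splits

variable {M M₁ M₂ : Set V}

theorem symm (hM : T.Splits M M₁ M₂) : T.Splits M M₂ M₁ :=
  ⟨hM.mem, hM.right_mem, hM.left_mem, hM.disjoint.symm, Set.union_comm M₁ M₂ ▸ hM.union_eq⟩

theorem left_subset (hM : T.Splits M M₁ M₂) : M₁ ⊆ M :=
  hM.union_eq ▸ Set.subset_union_left

theorem right_subset (hM : T.Splits M M₁ M₂) : M₂ ⊆ M :=
  hM.symm.left_subset

theorem not_subset_right (hM : T.Splits M M₁ M₂) : ¬ M ⊆ M₂ := by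
  obtain ⟨u, hu⟩ := T.nonempty_of_mem M₁ hM.left_mem
  exact fun h => Set.disjoint_left.1 hM.disjoint hu (h (hM.left_subset hu))

theorem not_subset_left (hM : T.Splits M M₁ M₂) : ¬ M ⊆ M₁ :=
  hM.symm.not_subset_right

theorem lca_eq [Finite V] (hM : T.Splits M M₁ M₂) {a b : V} (ha : a ∈ M₁) (hb : b ∈ M₂) :
    T.lca a b = M := by
  refine (T.lca_subset hM.mem (hM.left_subset ha) (hM.right_subset hb)).antisymm ?_
  rw [← hM.union_eq]
  refine Set.union_subset (T.subset_lca_of_not_mem hM.left_mem ha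
    fun h => Set.disjoint_left.1 hM.disjoint h hb) ?_
  rw [T.lca_comm]
  exact T.subset_lca_of_not_mem hM.right_mem hb fun h => Set.disjoint_left.1 hM.disjoint ha h

end Splits

theorem IsBinary.exists_splits (hT : T.IsBinary) {M : Set V} (hM : M ∈ T.clusters)
    (hcard : 1 < M.ncard) : ∃ M₁ M₂, T.Splits M M₁ M₂ := by
  obtain ⟨M₁, hM₁, M₂, hM₂, hdisj, hunion, -, -⟩ := hT M hM hcard
  exact ⟨M₁, M₂, hM, hM₁, hM₂, hdisj, hunion⟩

end PhyloTree

section BestMatch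

variable {V Γ : Type*} {T : PhyloTree V} {σ : V → Γ} {E : V → V → Prop} {a b y : V}

theorem bestMatch.mem_of_mem [Finite V] (hb : bestMatch T σ a b) {W : Set V}
    (hW : W ∈ T.clusters) (ha : a ∈ W) (hy : y ∈ W) (hσ : σ y = σ b) : b ∈ W :=
  T.lca_subset hW ha hy (hb.2 y hσ T.mem_lca_right)

theorem bestMatch.of_lca_subset (hb : bestMatch T σ a b) (hσ : σ y = σ b)
    (hlca : T.lca a y ⊆ T.lca a b) : bestMatch T σ a y :=
  ⟨hσ ▸ hb.1, fun y' hy' => hlca.trans (hb.2 y' (hy'.trans hσ))⟩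

theorem PhyloTree.Splits.not_mem_of_bestMatch [Finite V] {M M₁ M₂ : Set V}
    (hM : T.Splits M M₁ M₂) {b' : V} (hb : bestMatch T σ a b) (hb' : bestMatch T σ a b')
    (hσ : σ b = σ b') (hb₁ : b ∈ M₁) (hb'₂ : b' ∈ M₂) : a ∉ M := by
  rw [← hM.union_eq]
  rintro (ha | ha)
  · exact Set.disjoint_left.1 hM.disjoint (hb'.mem_of_mem hM.left_mem ha hb₁ hσ) hb'₂
  · exact Set.disjoint_left.1 hM.disjoint hb₁ (hb.mem_of_mem hM.right_mem ha hb'₂ hσ.symm)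

theorem exists_bestMatch [Finite V] (T : PhyloTree V) (σ : V → Γ) (h : σ y ≠ σ a) :
    ∃ b, σ b = σ y ∧ bestMatch T σ a b := by
  obtain ⟨b, hb, hmin⟩ := (Set.toFinite {w | σ w = σ y}).exists_minimalFor (T.lca a)
    {w | σ w = σ y} ⟨y, rfl⟩
  refine ⟨b, hb, fun h' => h (hb ▸ h'.symm), fun y' hy' => ?_⟩
  rcases T.subset_or_subset_of_mem (T.lca_mem a b) (T.lca_mem a y') T.mem_lca_left
    T.mem_lca_left with h | h
  · exact h
  · exact hmin (hy'.trans hb) h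

theorem Explains.sfColored [Finite V] (h : Explains T σ E) : SfColored E σ := by
  refine ⟨fun x y hxy => ((h x y).1 hxy).1, fun x y hxy => ?_⟩
  obtain ⟨z, hz, hbm⟩ := exists_bestMatch T σ hxy
  exact ⟨z, (h x z).2 hbm, hz⟩

/-- Informative triples rule out non-arcs; forbidden triples make the lcas of same-colored arcs
equal. -/
theorem explains_of_displaysSet_Rbin (hE : SfColored E σ) (hd : T.DisplaysSet (Rbin E σ)) :
    Explains T σ E := by
  intro x y
  constructor
  · intro hxy
    refine ⟨hE.1 x y hxy, fun y' hy' => ?_⟩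
    by_cases hxy' : E x y'
    · obtain rfl | hyy' := eq_or_ne y y'
      · exact subset_rfl
      have h := (hd (y, y', x) (Or.inr ⟨hE.1 x y hxy, hy'.symm, hyy', hxy, hxy'⟩)).2.2.2.2
      rw [T.lca_comm y, T.lca_comm y'] at h
      exact h.le
    · exact (hd (x, y, y') (Or.inl ⟨hE.1 x y hxy, hy'.symm, hxy, hxy'⟩)).2.2.2.1.subset
  · intro hbm
    obtain ⟨z, hxz, hσz⟩ := hE.2 x y (Ne.symm hbm.1)
    by_contra hxy
    exact (hd (x, z, y) (Or.inl ⟨hσz ▸ hbm.1, hσz, hxz, hxy⟩)).2.2.2.1.not_subset (hbm.2 z hσz)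

theorem fst_ne_of_mem_Rbin {t : V × V × V} (ht : t ∈ Rbin E σ) : t.1 ≠ t.2.1 := by
  rcases ht with ⟨hσ, -⟩ | ⟨-, -, hne, -⟩
  · exact fun h => hσ (congrArg σ h)
  · exact hne

end BestMatch

section AhoComponent

variable {V : Type*} {R : Set (V × V × V)} {L A W : Set V} {x y z : V}

instance (R : Set (V × V × V)) (L : Set V) : Std.Symm (ahoAdj R L) where
  symm _ _ := fun ⟨hx, hy, z, hz, h⟩ => ⟨hy, hx, z, hz, h.symm⟩

theorem mem_ahoComponent_self : x ∈ ahoComponent R L x :=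
  ReflTransGen.refl

theorem mem_ahoComponent_comm : y ∈ ahoComponent R L x ↔ x ∈ ahoComponent R L y :=
  Std.Symm.iff _ _

theorem mem_ahoComponent_trans (hy : y ∈ ahoComponent R L x) (hz : z ∈ ahoComponent R L y) :
    z ∈ ahoComponent R L x :=
  ReflTransGen.trans hy hz

theorem ahoComponent_eq_of_mem (hy : y ∈ ahoComponent R L x) :
    ahoComponent R L x = ahoComponent R L y :=
  Set.ext fun _ => ⟨mem_ahoComponent_trans (mem_ahoComponent_comm.1 hy),
    mem_ahoComponent_trans hy⟩

theorem ahoComponent_subset (hx : x ∈ L) : ahoComponent R L x ⊆ L := fun y hy => by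
  induction (hy : ReflTransGen (ahoAdj R L) x y) with
  | refl => exact hx
  | tail _ h _ => exact h.2.1

theorem mem_ahoComponent_of_mem (ht : (x, y, z) ∈ R) (hx : x ∈ L) (hy : y ∈ L) (hz : z ∈ L) :
    y ∈ ahoComponent R L x :=
  ReflTransGen.single ⟨hx, hy, z, hz, Or.inl ht⟩

variable (R) in
/-- The Aho clusters containing `x`, from the root downwards. -/
def ahoIter (x : V) : ℕ → Set V
  | 0 => Set.univ
  | n + 1 => ahoComponent R (ahoIter x n) x

theorem mem_ahoIter : ∀ n, x ∈ ahoIter R x n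
  | 0 => trivial
  | _ + 1 => mem_ahoComponent_self

theorem ahoIter_antitone : Antitone (ahoIter R x) :=
  antitone_nat_of_succ_le fun n => ahoComponent_subset (mem_ahoIter n)

theorem IsAhoCluster.exists_eq_ahoIter (hA : IsAhoCluster R A) (hx : x ∈ A) :
    ∃ n, A = ahoIter R x n := by
  induction hA generalizing x with
  | univ => exact ⟨0, rfl⟩
  | @component L w _ hw ih =>
    obtain ⟨n, rfl⟩ := ih (ahoComponent_subset hw hx)
    exact ⟨n + 1, ahoComponent_eq_of_mem hx⟩

theorem IsAhoCluster.subset_ahoComponent_of_ssubset (hW : IsAhoCluster R W)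
    (hL : IsAhoCluster R L) (hx : x ∈ W) (hWL : W ⊂ L) : W ⊆ ahoComponent R L x := by
  obtain ⟨m, rfl⟩ := hW.exists_eq_ahoIter hx
  obtain ⟨n, rfl⟩ := hL.exists_eq_ahoIter (hWL.subset hx)
  rcases le_or_gt m n with h | h
  · exact absurd (ahoIter_antitone h) hWL.not_subset
  · exact ahoIter_antitone (Nat.succ_le_of_lt h)

/-- Otherwise the chain `ahoIter R x` would be constant from `L` on and never reach `{x}`. -/
theorem IsAhoCluster.ahoComponent_ne_self (hL : IsAhoCluster R L) (hx : IsAhoCluster R {x})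
    (hxL : x ∈ L) (hyL : y ∈ L) (hxy : x ≠ y) : ahoComponent R L x ≠ L := by
  intro hfix
  obtain ⟨n, rfl⟩ := hL.exists_eq_ahoIter hxL
  obtain ⟨k, hk⟩ := hx.exists_eq_ahoIter rfl
  have hstab : ∀ m, ahoIter R x (n + m) = ahoIter R x n := by
    intro m
    induction m with
    | zero => rfl
    | succ m ih => exact (congrArg (ahoComponent R · x) ih).trans hfix
  have hyk : y ∈ ahoIter R x k := by
    rcases le_total k n with h | h
    · exact ahoIter_antitone h hyL
    · rwa [← Nat.add_sub_cancel' h, hstab]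
  rw [← hk] at hyk
  exact hxy hyk.symm

end AhoComponent

namespace IsAhoTree

variable {V Γ : Type*} {R : Set (V × V × V)} {T : PhyloTree V} {L A : Set V} {a b x y z : V}

theorem mem_clusters (hT : IsAhoTree R T) (hA : IsAhoCluster R A) : A ∈ T.clusters :=
  hT ▸ hA

theorem isAhoCluster (hT : IsAhoTree R T) (hA : A ∈ T.clusters) : IsAhoCluster R A :=
  (hT ▸ hA :)

theorem ahoComponent_mem (hT : IsAhoTree R T) (hL : IsAhoCluster R L) (hx : x ∈ L) :
    ahoComponent R L x ∈ T.clusters :=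
  hT.mem_clusters (hL.component hx)

variable [Finite V]

theorem not_mem_lca (hT : IsAhoTree R T) (ht : (x, y, z) ∈ R) (hxy : x ≠ y) :
    z ∉ T.lca x y := by
  intro hz
  have hP := hT.isAhoCluster (T.lca_mem x y)
  refine hP.ahoComponent_ne_self (hT.isAhoCluster (T.singleton_mem x)) T.mem_lca_left
    T.mem_lca_right hxy ((ahoComponent_subset T.mem_lca_left).antisymm ?_)
  exact T.lca_subset (hT.ahoComponent_mem hP T.mem_lca_left) mem_ahoComponent_self
    (mem_ahoComponent_of_mem ht T.mem_lca_left T.mem_lca_right hz)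

theorem displaysSet_of_refines (hT : IsAhoTree R T) {T₂ : PhyloTree V} (h : T₂.Refines T)
    (hR : ∀ t ∈ R, t.1 ≠ t.2.1) : T₂.DisplaysSet R := fun ⟨x, y, _⟩ ht =>
  T₂.displays_of_mem_of_not_mem (hR _ ht) (h (T.lca_mem x y)) T.mem_lca_left T.mem_lca_right
    (hT.not_mem_lca ht (hR _ ht))

theorem subset_lca_of_not_mem_ahoComponent (hT : IsAhoTree R T) (hL : IsAhoCluster R L)
    (ha : a ∈ L) (hy : y ∉ ahoComponent R L a) : L ⊆ T.lca a y := by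
  rcases T.subset_or_subset_of_mem (T.lca_mem a y) (hT.mem_clusters hL) T.mem_lca_left ha
    with h | h
  · rcases h.eq_or_ssubset with h | h
    · exact h.ge
    · exact absurd ((hT.isAhoCluster (T.lca_mem a y)).subset_ahoComponent_of_ssubset hL
        T.mem_lca_left h T.mem_lca_right) hy
  · exact h

theorem bestMatch_of_forall_ne (hT : IsAhoTree R T) {σ : V → Γ} (hL : IsAhoCluster R L)
    (ha : a ∈ L) (hb : b ∈ L) (hσ : σ a ≠ σ b)
    (hnone : ∀ y ∈ ahoComponent R L a, σ y ≠ σ b) : bestMatch T σ a b :=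
  ⟨hσ, fun y hy => (T.lca_subset (hT.mem_clusters hL) ha hb).trans
    (hT.subset_lca_of_not_mem_ahoComponent hL ha fun hyC => hnone y hyC hy)⟩

theorem forall_ne_of_bestMatch (hT : IsAhoTree R T) {σ : V → Γ} (hL : IsAhoCluster R L)
    (ha : a ∈ L) (hb : bestMatch T σ a b) (hbC : b ∉ ahoComponent R L a) :
    ∀ y ∈ ahoComponent R L a, σ y ≠ σ b := fun _ hy hσ =>
  hbC (hb.mem_of_mem (hT.ahoComponent_mem hL ha) mem_ahoComponent_self hy hσ)

end IsAhoTree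

section BinaryRefinableTree

variable {V Γ : Type*} [Finite V] {E : V → V → Prop} {σ : V → Γ} {T T' : PhyloTree V}
  {L M M₁ M₂ : Set V} {p q w z : V}

theorem explains_of_refines (hT : IsAhoTree (Rbin E σ) T) (hE : SfColored E σ)
    {T₂ : PhyloTree V} (h : T₂.Refines T) : Explains T₂ σ E :=
  explains_of_displaysSet_Rbin hE (hT.displaysSet_of_refines h fun _ => fst_ne_of_mem_Rbin)

theorem false_of_informative_crossing (hT : IsAhoTree (Rbin E σ) T) (hTex : Explains T σ E)
    (hT'ex : Explains T' σ E) (hL : IsAhoCluster (Rbin E σ) L) (hM : T'.Splits M M₁ M₂)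
    (hML : M ⊆ L) (hCM : ahoComponent (Rbin E σ) L p ⊆ M) (hzM : z ∈ M)
    (hzC : z ∉ ahoComponent (Rbin E σ) L p) (hp : p ∈ M₁) (hq : q ∈ M₂) (hw : w ∈ L)
    (ht : (p, q, w) ∈ informativeTriples E σ) : False := by
  obtain ⟨hσpq, hσqw, hEpq, hEpw⟩ := ht
  have hpL := hML (hM.left_subset hp)
  have hqL := hML (hM.right_subset hq)
  have hzL := hML hzM
  have hqC : q ∈ ahoComponent (Rbin E σ) L p :=
    mem_ahoComponent_of_mem (Or.inl ⟨hσpq, hσqw, hEpq, hEpw⟩) hpL hqL hw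
  have hbm := (hT'ex p q).1 hEpq
  have hM₁ : ∀ y ∈ M₁, σ y ≠ σ q := fun y hy hσ =>
    Set.disjoint_left.1 hM.disjoint (hbm.mem_of_mem hM.left_mem hp hy hσ) hq
  have hM₂ : ∀ y ∈ M₂, σ y = σ q → E p y := fun y hy hσ =>
    (hT'ex p y).2 (hbm.of_lca_subset hσ (by rw [hM.lca_eq hp hy, hM.lca_eq hp hq]))
  have hM₂C : ∀ y ∈ M₂, σ y = σ q → y ∈ ahoComponent (Rbin E σ) L p := fun y hy hσ =>
    ((hTex p y).1 (hM₂ y hy hσ)).mem_of_mem (hT.ahoComponent_mem hL hpL)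
      mem_ahoComponent_self hqC hσ.symm
  have hwM : w ∉ M := by
    rw [← hM.union_eq]
    rintro (h | h)
    · exact hM₁ w h hσqw.symm
    · exact hEpw (hM₂ w h hσqw.symm)
  have hσzq : σ z ≠ σ q := by
    intro hσ
    rw [← hM.union_eq] at hzM
    rcases hzM with h | h
    · exact hM₁ z h hσ
    · exact hzC (hM₂C z h hσ)
  -- a best match `y` of `z` in `T'` of color `σ q` lies in `M`, hence in `M₂` and in the
  -- component of `p`, not in that of `z`; so the component of `z` has no leaf of color `σ q`
  obtain ⟨y, hσy, hzy⟩ := exists_bestMatch T' σ (Ne.symm hσzq)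
  have hyC : y ∈ ahoComponent (Rbin E σ) L p := by
    have hyM := hzy.mem_of_mem hM.mem hzM (hM.right_subset hq) hσy.symm
    rw [← hM.union_eq] at hyM
    rcases hyM with h | h
    · exact absurd hσy (hM₁ y h)
    · exact hM₂C y h hσy
  have hnone := hT.forall_ne_of_bestMatch hL hzL ((hTex z y).1 ((hT'ex z y).2 hzy))
    fun h => hzC (mem_ahoComponent_trans hyC (mem_ahoComponent_comm.1 h))
  rw [hσy] at hnone
  -- so `q` and `w` are both best matches of `z`, which joins `w` to `q` in the Aho graph
  have hEzq := (hTex z q).2 (hT.bestMatch_of_forall_ne hL hzL hqL hσzq hnone)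
  have hEzw := (hTex z w).2 (hT.bestMatch_of_forall_ne hL hzL hw (hσqw ▸ hσzq)
    (hσqw ▸ hnone))
  have hqw : q ≠ w := fun h => hwM (h ▸ hM.right_subset hq)
  exact hwM (hCM (mem_ahoComponent_trans hqC
    (mem_ahoComponent_of_mem (Or.inr ⟨hσzq, hσqw, hqw, hEzq, hEzw⟩) hqL hw hzL)))

theorem false_of_forbidden_crossing (hT : IsAhoTree (Rbin E σ) T) (hTex : Explains T σ E)
    (hT'ex : Explains T' σ E) (hL : IsAhoCluster (Rbin E σ) L) (hM : T'.Splits M M₁ M₂)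
    (hML : M ⊆ L) (hCM : ahoComponent (Rbin E σ) L p ⊆ M) (hzM : z ∈ M)
    (hzC : z ∉ ahoComponent (Rbin E σ) L p) (hp : p ∈ M₁) (hq : q ∈ M₂) (hw : w ∈ L)
    (ht : (w, p, q) ∈ forbiddenTriples E σ) : False := by
  obtain ⟨hσwp, hσpq, -, hEwp, hEwq⟩ := ht
  have hpL := hML (hM.left_subset hp)
  have hqL := hML (hM.right_subset hq)
  have hzL := hML hzM
  have hwM := hM.not_mem_of_bestMatch ((hT'ex w p).1 hEwp) ((hT'ex w q).1 hEwq) hσpq hp hq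
  have hnone_w := hT.forall_ne_of_bestMatch hL hw ((hTex w p).1 hEwp)
    fun h => hwM (hCM (mem_ahoComponent_comm.1 h))
  -- every leaf `y ∈ L` of color `σ p` is a best match of `w`, hence Aho-adjacent to `p`
  have hcolor : ∀ y ∈ L, σ y = σ p → y ∈ ahoComponent (Rbin E σ) L p := by
    intro y hy hσy
    obtain rfl | hpy := eq_or_ne p y
    · exact mem_ahoComponent_self
    have hEwy := (hTex w y).2 (hT.bestMatch_of_forall_ne hL hw hy (hσy ▸ hσwp)
      (hσy ▸ hnone_w))
    exact mem_ahoComponent_of_mem (Or.inr ⟨hσwp, hσy.symm, hpy, hEwp, hEwy⟩) hpL hy hw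
  have hnone_z : ∀ u ∈ ahoComponent (Rbin E σ) L z, σ u ≠ σ p := fun u hu hσu =>
    hzC (mem_ahoComponent_trans (hcolor u (ahoComponent_subset hzL hu) hσu)
      (mem_ahoComponent_comm.1 hu))
  have hσzp : σ z ≠ σ p := fun h => hzC (hcolor z hzL h)
  have hEzp := (hTex z p).2 (hT.bestMatch_of_forall_ne hL hzL hpL hσzp hnone_z)
  have hEzq := (hTex z q).2 (hT.bestMatch_of_forall_ne hL hzL hqL (hσpq ▸ hσzp)
    (hσpq ▸ hnone_z))
  exact hM.not_mem_of_bestMatch ((hT'ex z p).1 hEzp) ((hT'ex z q).1 hEzq) hσpq hp hq hzM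

theorem false_of_crossing (hT : IsAhoTree (Rbin E σ) T) (hTex : Explains T σ E)
    (hT'ex : Explains T' σ E) (hL : IsAhoCluster (Rbin E σ) L) (hM : T'.Splits M M₁ M₂)
    (hML : M ⊆ L) (hCM : ahoComponent (Rbin E σ) L p ⊆ M) (hzM : z ∈ M)
    (hzC : z ∉ ahoComponent (Rbin E σ) L p) (hp : p ∈ M₁) (hq : q ∈ M₂)
    (hpq : ahoAdj (Rbin E σ) L p q) : False := by
  obtain ⟨hpL, hqL, w, hw, hpqw | hqpw⟩ := hpq
  · rcases hpqw with hI | hF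
    · exact false_of_informative_crossing hT hTex hT'ex hL hM hML hCM hzM hzC hp hq hw hI
    · exact false_of_forbidden_crossing hT hTex hT'ex hL hM hML hCM hzM hzC hp hq hw hF
  · rw [ahoComponent_eq_of_mem (mem_ahoComponent_comm.1 (mem_ahoComponent_of_mem hqpw hqL hpL hw))]
      at hCM hzC
    rcases hqpw with hI | hF
    · exact false_of_informative_crossing hT hTex hT'ex hL hM.symm hML hCM hzM hzC hq hp hw hI
    · exact false_of_forbidden_crossing hT hTex hT'ex hL hM.symm hML hCM hzM hzC hq hp hw hF

theorem ahoComponent_mem_clusters_of_explains (hT : IsAhoTree (Rbin E σ) T)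
    (hTex : Explains T σ E) (hT'ex : Explains T' σ E) (hbin : T'.IsBinary)
    (hL : IsAhoCluster (Rbin E σ) L) (hL' : L ∈ T'.clusters) {x : V} (hx : x ∈ L) :
    ahoComponent (Rbin E σ) L x ∈ T'.clusters := by
  obtain ⟨M, ⟨hM, hCM⟩, hmin⟩ := T'.exists_least_cluster
    {A | A ∈ T'.clusters ∧ ahoComponent (Rbin E σ) L x ⊆ A} (fun _ hA => hA.1)
    (fun _ hA => hA.2 mem_ahoComponent_self) ⟨L, hL', ahoComponent_subset hx⟩
  suffices hMC : M ⊆ ahoComponent (Rbin E σ) L x from hMC.antisymm hCM ▸ hM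
  intro z hzM
  by_contra hzC
  have hML : M ⊆ L := hmin L ⟨hL', ahoComponent_subset hx⟩
  obtain ⟨M₁, M₂, hsplit⟩ := hbin.exists_splits hM ((Set.one_lt_ncard M.toFinite).2
    ⟨x, hCM mem_ahoComponent_self, z, hzM, fun h => hzC (h ▸ mem_ahoComponent_self)⟩)
  have hCM₁₂ : ahoComponent (Rbin E σ) L x ⊆ M₁ ∪ M₂ := hsplit.union_eq ▸ hCM
  -- by minimality of `M`, the component meets both children
  obtain ⟨p₀, hp₀C, hp₀⟩ : ∃ p ∈ ahoComponent (Rbin E σ) L x, p ∈ M₁ := by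
    by_contra! h
    exact hsplit.not_subset_right
      (hmin M₂ ⟨hsplit.right_mem, fun y hy => (hCM₁₂ hy).resolve_left (h y hy)⟩)
  obtain ⟨q₀, hq₀C, hq₀⟩ : ∃ q ∈ ahoComponent (Rbin E σ) L x, q ∈ M₂ := by
    by_contra! h
    exact hsplit.not_subset_left
      (hmin M₁ ⟨hsplit.left_mem, fun y hy => (hCM₁₂ hy).resolve_right (h y hy)⟩)
  obtain ⟨p, q, hp₀p, hp, hpq, hq⟩ :=
    ReflTransGen.exists_rel_mem_not_mem (S := M₁)
      (mem_ahoComponent_trans (mem_ahoComponent_comm.1 hp₀C) hq₀C) hp₀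
      (Set.disjoint_right.1 hsplit.disjoint hq₀)
  have hpC := mem_ahoComponent_trans hp₀C hp₀p
  have hqM₂ := (hCM₁₂ (mem_ahoComponent_trans hpC (ReflTransGen.single hpq))).resolve_left hq
  rw [ahoComponent_eq_of_mem hpC] at hCM hzC
  exact false_of_crossing hT hTex hT'ex hL hsplit hML hCM hzM hzC hp hqM₂ hpq

theorem refines_of_explains (hT : IsAhoTree (Rbin E σ) T) (hTex : Explains T σ E)
    (hT'ex : Explains T' σ E) (hbin : T'.IsBinary) : T'.Refines T := by
  suffices h : ∀ A, IsAhoCluster (Rbin E σ) A → A ∈ T'.clusters from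
    fun A hA => h A (hT.isAhoCluster hA)
  intro A hA
  induction hA with
  | univ => exact T'.univ_mem
  | component hL hx ih =>
    exact ahoComponent_mem_clusters_of_explains hT hTex hT'ex hbin hL ih hx

end BinaryRefinableTree

/-- Corollary: binary-iff-refinement.
Let `(G,σ)` be a binary-explainable BMG with binary-refinable tree `(T,σ)` (the Aho
tree of `R^bin(G,σ)`). A binary tree `(T',σ)` on the vertex set of `G` explains
`(G,σ)` if and only if `(T',σ)` is a refinement of `(T,σ)`. -/
theorem stmt11 {V Γ : Type*} [Fintype V] (E : V → V → Prop) (σ : V → Γ)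
    (hbe : BinaryExplainable E σ)
    (T : PhyloTree V) (hT : IsAhoTree (Rbin E σ) T)
    (T' : PhyloTree V) (hbin : T'.IsBinary) :
    Explains T' σ E ↔ T'.Refines T := by
  obtain ⟨T₀, -, hT₀⟩ := hbe
  have hsf : SfColored E σ := hT₀.sfColored
  have hTex : Explains T σ E := explains_of_refines hT hsf subset_rfl
  exact ⟨fun hT' => refines_of_explains hT hTex hT' hbin, explains_of_refines hT hsf⟩
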